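/- arXiv:2301.08886 — 3 statements merged into one kernel-verified Lean document; each statement's English description precedes it below -/
import Mathlib

section
/- Let d ≥ 0 and let V be a nondegenerate k/κ-hermitian space of dimension 2d+1. Let W ⊆ V be a special subspace of codimension r (so dim W = 2d+1−r, 0 ≤ r ≤ d), let π : W → W/W⊥ be the quotient map, and equip W/W⊥ with the induced nondegenerate hermitian form h̄ satisfying h̄(π(x),π(y)) = (x,y). Then the map U ↦ π(U) is a bijection from the set {U ⊆ V : dim U = d+1, U⊥ ⊆ U, U ⊆ W} onto the set {Ū ⊆ W/W⊥ : dim Ū = d+1−r, Ū⊥ ⊆ Ū}, where in the target the orthogonal complement Ū⊥ is taken inside W/W⊥ with respect to h̄; its inverse is Ū ↦ π^{−1}(Ū). -/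
/-!
Since `U⊥ ⊆ U ⊆ W` forces `W⊥ ⊆ U`, the map `U ↦ π(U)` is the usual correspondence between
subspaces of `V` lying between `W⊥` and `W` and subspaces of `W/W⊥`, with inverse `Ū ↦ π⁻¹(Ū)`;
it lowers dimension by `r = dim W⊥`. It also commutes with orthogonal complements,
`π⁻¹(Ū)⊥ = π⁻¹(Ū⊥)`, because `π⁻¹(Ū)⊥ ⊆ (W⊥)⊥ = W`. The last equality is the dimension formula
`dim U⊥ + dim U = dim V`: `U⊥` is the annihilator of the image of `U` under the injective
`σ`-semilinear map `y ↦ (·, y)` into the dual, and `σ` is bijective because `k` is finite.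
-/
open Module

variable {k : Type*} [Field k] {V : Type*} [AddCommGroup V] [Module k V]

/-- The orthogonal complement `U⊥ = {x : (x, u) = 0 for all u ∈ U}` of a subspace with
respect to a sesquilinear form (linear in the first variable). -/
def perp {k V : Type*} [Field k] [AddCommGroup V] [Module k V]
    {σ : k →+* k} (h : V →ₗ[k] V →ₛₗ[σ] k) (U : Submodule k V) : Submodule k V where
  carrier := {x | ∀ u ∈ U, h x u = 0}
  add_mem' := by
    intro x y hx hy u hu
    simp [hx u hu, hy u hu]
  zero_mem' := by
    intro u hu
    simp
  smul_mem' := by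
    intro a x hx u hu
    simp [hx u hu]

section Perp

variable {σ : k →+* k}

@[simp]
theorem mem_perp {h : V →ₗ[k] V →ₛₗ[σ] k} {U : Submodule k V} {x : V} :
    x ∈ perp h U ↔ ∀ u ∈ U, h x u = 0 :=
  Iff.rfl

theorem perp_anti (h : V →ₗ[k] V →ₛₗ[σ] k) {U₁ U₂ : Submodule k V} (hU : U₁ ≤ U₂) :
    perp h U₂ ≤ perp h U₁ :=
  fun _ hx u hu => hx u (hU hu)

theorem le_perp_perp {h : V →ₗ[k] V →ₛₗ[σ] k} (hrefl : h.IsRefl) (U : Submodule k V) :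
    U ≤ perp h (perp h U) :=
  fun u hu _ hx => hrefl _ _ (hx u hu)

variable [RingHomSurjective σ]

theorem Submodule.finrank_map_of_injective {V' : Type*} [AddCommGroup V'] [Module k V']
    {f : V →ₛₗ[σ] V'} (hf : Function.Injective f) (U : Submodule k V) :
    finrank k (U.map f) = finrank k U := by
  let e : U ≃+ U.map f := AddEquiv.ofBijective (f.submoduleMap U).toAddMonoidHom
    ⟨fun x y hxy => Subtype.ext (hf (congrArg Subtype.val hxy)), f.submoduleMap_surjective U⟩
  have := lift_rank_eq_of_equiv_equiv σ e ⟨σ.injective, RingHomSurjective.is_surjective⟩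
    fun c u => Subtype.ext (f.map_smulₛₗ c u)
  simpa [finrank] using (congrArg Cardinal.toNat this).symm

theorem perp_eq_dualCoannihilator (h : V →ₗ[k] V →ₛₗ[σ] k) (U : Submodule k V) :
    perp h U = (U.map h.flip).dualCoannihilator := by
  ext x
  simp [Submodule.mem_dualCoannihilator]

theorem finrank_perp_add_finrank [FiniteDimensional k V] {h : V →ₗ[k] V →ₛₗ[σ] k}
    (hsep : h.SeparatingRight) (U : Submodule k V) :
    finrank k (perp h U) + finrank k U = finrank k V := by
  have hinj : Function.Injective h.flip :=
    LinearMap.ker_eq_bot.mp (LinearMap.separatingRight_iff_flip_ker_eq_bot.mp hsep)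
  rw [perp_eq_dualCoannihilator, ← Submodule.finrank_map_of_injective hinj U, add_comm]
  exact Subspace.finrank_add_finrank_dualCoannihilator_eq _

theorem perp_perp [FiniteDimensional k V] {h : V →ₗ[k] V →ₛₗ[σ] k} (hrefl : h.IsRefl)
    (hsep : h.SeparatingRight) (U : Submodule k V) : perp h (perp h U) = U := by
  have h₁ := finrank_perp_add_finrank hsep U
  have h₂ := finrank_perp_add_finrank hsep (perp h U)
  exact (Submodule.eq_of_le_of_finrank_le (le_perp_perp hrefl U) (by omega)).symm

end Perp

theorem Submodule.finrank_comap_of_surjective {M M₂ : Type*} [AddCommGroup M] [Module k M]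
    [AddCommGroup M₂] [Module k M₂] [FiniteDimensional k M] {f : M →ₗ[k] M₂}
    (hf : Function.Surjective f) (p : Submodule k M₂) :
    finrank k (p.comap f) = finrank k p + finrank k (LinearMap.ker f) := by
  let g : p.comap f →ₗ[k] p := f.restrict fun _ hx => hx
  have hg : LinearMap.range g = ⊤ := LinearMap.range_eq_top.mpr fun y => by
    obtain ⟨x, hx⟩ := hf y
    exact ⟨⟨x, by simp [hx]⟩, Subtype.ext hx⟩
  have hker : (LinearMap.ker g).map (p.comap f).subtype = LinearMap.ker f := by
    ext x
    simp only [Submodule.mem_map, LinearMap.mem_ker, Submodule.subtype_apply, g]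
    exact ⟨fun ⟨y, hy, hyx⟩ => hyx ▸ congrArg Subtype.val hy,
      fun hx => ⟨⟨x, by simp [hx]⟩, Subtype.ext hx, rfl⟩⟩
  rw [← g.finrank_range_add_finrank_ker, hg, finrank_top, ← hker, Submodule.finrank_map_subtype_eq]

section Quotient

variable {W : Submodule k V} {N : Submodule k W}

theorem map_subtype_comap_mkQ_le_iff {P Q : Submodule k (W ⧸ N)} :
    (P.comap N.mkQ).map W.subtype ≤ (Q.comap N.mkQ).map W.subtype ↔ P ≤ Q := by
  rw [Submodule.map_le_map_iff_of_injective W.injective_subtype,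
    Submodule.comap_le_comap_iff_of_surjective N.mkQ_surjective]

theorem map_mkQ_comap_subtype_map_subtype_comap_mkQ (P : Submodule k (W ⧸ N)) :
    (((P.comap N.mkQ).map W.subtype).comap W.subtype).map N.mkQ = P := by
  rw [Submodule.comap_map_eq_of_injective W.injective_subtype,
    Submodule.map_comap_eq_of_surjective N.mkQ_surjective]

theorem map_subtype_comap_mkQ_map_mkQ_comap_subtype {U : Submodule k V}
    (hNU : N.map W.subtype ≤ U) (hUW : U ≤ W) :
    (((U.comap W.subtype).map N.mkQ).comap N.mkQ).map W.subtype = U := by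
  rw [Submodule.comap_map_mkQ, Submodule.map_sup, Submodule.map_comap_subtype,
    inf_eq_right.mpr hUW, sup_eq_right.mpr hNU]

theorem map_subtype_le_map_subtype_comap_mkQ (P : Submodule k (W ⧸ N)) :
    N.map W.subtype ≤ (P.comap N.mkQ).map W.subtype :=
  Submodule.map_mono (N.ker_mkQ.ge.trans (LinearMap.ker_le_comap _))

theorem finrank_map_subtype_comap_mkQ [FiniteDimensional k V] (P : Submodule k (W ⧸ N)) :
    finrank k ((P.comap N.mkQ).map W.subtype) = finrank k P + finrank k N := by
  rw [Submodule.finrank_map_subtype_eq, Submodule.finrank_comap_of_surjective N.mkQ_surjective,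
    N.ker_mkQ]

theorem perp_map_subtype_comap_mkQ {σ : k →+* k} {h : V →ₗ[k] V →ₛₗ[σ] k}
    {hb : (W ⧸ N) →ₗ[k] (W ⧸ N) →ₛₗ[σ] k}
    (hbcompat : ∀ x y : W,
      hb (Submodule.Quotient.mk x) (Submodule.Quotient.mk y) = h (x : V) (y : V))
    (hW : perp h (N.map W.subtype) ≤ W) (P : Submodule k (W ⧸ N)) :
    perp h ((P.comap N.mkQ).map W.subtype) = ((perp hb P).comap N.mkQ).map W.subtype := by
  have hcomap : (perp hb P).comap N.mkQ =
      (perp h ((P.comap N.mkQ).map W.subtype)).comap W.subtype := by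
    ext y
    simp only [Submodule.mem_comap, Submodule.mkQ_apply, Submodule.subtype_apply, mem_perp]
    constructor
    · rintro hy _ ⟨z, hz, rfl⟩
      exact (hbcompat y z).symm.trans (hy _ hz)
    · intro hy ub hub
      obtain ⟨z, rfl⟩ := N.mkQ_surjective ub
      exact (hbcompat y z).trans (hy _ ⟨z, hub, rfl⟩)
  rw [hcomap, Submodule.map_comap_subtype, eq_comm, inf_eq_right]
  exact (perp_anti h (map_subtype_le_map_subtype_comap_mkQ P)).trans hW

end Quotient

theorem special_cycle_bijOn_general (d r : ℕ) (hr : r ≤ d)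
    [Fintype k]
    [FiniteDimensional k V] (hdim : finrank k V = 2 * d + 1)
    (σ : k →+* k)
    (h : V →ₗ[k] V →ₛₗ[σ] k)
    (hherm : ∀ x y : V, h x y = σ (h y x))
    (hnd : ∀ x : V, (∀ y : V, h x y = 0) → x = 0)
    (W : Submodule k V) (hW : perp h W ≤ W) (hWdim : finrank k W = 2 * d + 1 - r)
    (hb : (W ⧸ (perp h W).comap W.subtype) →ₗ[k]
          (W ⧸ (perp h W).comap W.subtype) →ₛₗ[σ] k)
    (hbcompat : ∀ x y : W,
      hb (Submodule.Quotient.mk x) (Submodule.Quotient.mk y) = h (x : V) (y : V)) :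
    Set.BijOn
      (fun U : Submodule k V => (U.comap W.subtype).map ((perp h W).comap W.subtype).mkQ)
      {U : Submodule k V | finrank k U = d + 1 ∧ perp h U ≤ U ∧ U ≤ W}
      {Ub : Submodule k (W ⧸ (perp h W).comap W.subtype) |
        finrank k Ub = d + 1 - r ∧ perp hb Ub ≤ Ub} ∧
    Set.InvOn
      (fun Ub : Submodule k (W ⧸ (perp h W).comap W.subtype) =>
        (Ub.comap ((perp h W).comap W.subtype).mkQ).map W.subtype)
      (fun U : Submodule k V => (U.comap W.subtype).map ((perp h W).comap W.subtype).mkQ)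
      {U : Submodule k V | finrank k U = d + 1 ∧ perp h U ≤ U ∧ U ≤ W}
      {Ub : Submodule k (W ⧸ (perp h W).comap W.subtype) |
        finrank k Ub = d + 1 - r ∧ perp hb Ub ≤ Ub} := by
  have : RingHomSurjective σ := ⟨Finite.surjective_of_injective σ.injective⟩
  have hrefl : h.IsRefl := fun x y hxy => by rw [hherm, hxy, map_zero]
  have hsep : h.SeparatingRight := fun y hy => hnd y fun x => hrefl x y (hy x)
  let N := (perp h W).comap W.subtype
  have hN : N.map W.subtype = perp h W := by
    rw [Submodule.map_comap_subtype, inf_eq_right.mpr hW]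
  have hNrank : finrank k N = r := by
    have := finrank_perp_add_finrank hsep W
    rw [← hN, Submodule.finrank_map_subtype_eq] at this
    omega
  have hperp := perp_map_subtype_comap_mkQ hbcompat (by rw [hN, perp_perp hrefl hsep W])
  have hinv : Set.InvOn (fun P : Submodule k (W ⧸ N) => (P.comap N.mkQ).map W.subtype)
      (fun U : Submodule k V => (U.comap W.subtype).map N.mkQ)
      {U | finrank k U = d + 1 ∧ perp h U ≤ U ∧ U ≤ W}
      {P | finrank k P = d + 1 - r ∧ perp hb P ≤ P} :=
    ⟨fun U ⟨_, hUperp, hUW⟩ => map_subtype_comap_mkQ_map_mkQ_comap_subtype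
      (hN ▸ (perp_anti h hUW).trans hUperp) hUW,
     fun P _ => map_mkQ_comap_subtype_map_subtype_comap_mkQ P⟩
  refine ⟨hinv.bijOn ?_ ?_, hinv⟩
  · intro U hU
    have hGF : (((U.comap W.subtype).map N.mkQ).comap N.mkQ).map W.subtype = U := hinv.1 hU
    simp only [Set.mem_ofPred_eq]
    refine ⟨?_, ?_⟩
    · have := finrank_map_subtype_comap_mkQ ((U.comap W.subtype).map N.mkQ)
      rw [hGF, hU.1, hNrank] at this
      omega
    · rw [← map_subtype_comap_mkQ_le_iff, ← hperp, hGF]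
      exact hU.2.1
  · rintro P ⟨hPdim, hPperp⟩
    refine ⟨?_, ?_, Submodule.map_subtype_le W _⟩
    · rw [finrank_map_subtype_comap_mkQ, hPdim, hNrank]
      omega
    · rw [hperp, map_subtype_comap_mkQ_le_iff]
      exact hPperp

/-- Let `V` be a nondegenerate `k/κ`-hermitian space of dimension `2d+1`
and `W ⊆ V` a special subspace of codimension `r`, with quotient map `π : W → W/W⊥` and
induced nondegenerate hermitian form `h̄` on `W/W⊥`. Then `U ↦ π(U)` is a bijection from
`{U : dim U = d+1, U⊥ ⊆ U, U ⊆ W}` onto `{Ū ⊆ W/W⊥ : dim Ū = d+1-r, Ū⊥ ⊆ Ū}`, with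
inverse `Ū ↦ π⁻¹(Ū)`. -/
theorem special_cycle_bijOn (q d r : ℕ) (hr : r ≤ d)
    [Fintype k] (hcard : Fintype.card k = q ^ 2)
    [FiniteDimensional k V] (hdim : finrank k V = 2 * d + 1)
    (σ : k →+* k) (hσ : ∀ x : k, σ x = x ^ q)
    (h : V →ₗ[k] V →ₛₗ[σ] k)
    (hherm : ∀ x y : V, h x y = σ (h y x))
    (hnd : ∀ x : V, (∀ y : V, h x y = 0) → x = 0)
    (W : Submodule k V) (hW : perp h W ≤ W) (hWdim : finrank k W = 2 * d + 1 - r)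
    (hb : (W ⧸ (perp h W).comap W.subtype) →ₗ[k]
          (W ⧸ (perp h W).comap W.subtype) →ₛₗ[σ] k)
    (hbcompat : ∀ x y : W,
      hb (Submodule.Quotient.mk x) (Submodule.Quotient.mk y) = h (x : V) (y : V)) :
    Set.BijOn
      (fun U : Submodule k V => (U.comap W.subtype).map ((perp h W).comap W.subtype).mkQ)
      {U : Submodule k V | finrank k U = d + 1 ∧ perp h U ≤ U ∧ U ≤ W}
      {Ub : Submodule k (W ⧸ (perp h W).comap W.subtype) |
        finrank k Ub = d + 1 - r ∧ perp hb Ub ≤ Ub} ∧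
    Set.InvOn
      (fun Ub : Submodule k (W ⧸ (perp h W).comap W.subtype) =>
        (Ub.comap ((perp h W).comap W.subtype).mkQ).map W.subtype)
      (fun U : Submodule k V => (U.comap W.subtype).map ((perp h W).comap W.subtype).mkQ)
      {U : Submodule k V | finrank k U = d + 1 ∧ perp h U ≤ U ∧ U ≤ W}
      {Ub : Submodule k (W ⧸ (perp h W).comap W.subtype) |
        finrank k Ub = d + 1 - r ∧ perp hb Ub ≤ Ub} :=
  special_cycle_bijOn_general d r hr hdim σ h hherm hnd W hW hWdim hb hbcompat
end

section
/- Let F be a field, d ≥ 1, n = 2d+1, and let V be an n-dimensional F-vector space. Let V_• and W_• be two transverse complete flags in V. Let a = (a_1,…,a_d) be integers with d+1 ≥ a_1 ≥ ⋯ ≥ a_d ≥ 0 and b = (b_1,…,b_{d+1}) integers with d ≥ b_1 ≥ ⋯ ≥ b_{d+1} ≥ 0, and assume |a| + |b| = d(d+2), where |a| = a_1+⋯+a_d and |b| = b_1+⋯+b_{d+1}. Set V^{(i)} = V_{n−d+i−a_i} for i = 1,…,d and W^{(i)} = W_{n−(d+1)+i−b_i} for i = 1,…,d+1. Then the set of pairs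 (U_d, U_{d+1}) of subspaces of V with U_d ⊆ U_{d+1}, dim U_d = d, dim U_{d+1} = d+1, dim(U_d ∩ V^{(i)}) ≥ i for i = 1,…,d, and dim(U_{d+1} ∩ W^{(i)}) ≥ i for i = 1,…,d+1, is nonempty if and only if b_1 = d and b_i = d+1−a_{d+2−i} for i = 2,…,d+1; and in that case this set consists of exactly one pair, namely U_d = Σ_{i=2}^{d+1} (W^{(i)} ∩ V^{(d+2−i)}) and U_{d+1} = U_d + W^{(1)}. -/
/-!
For `1 ≤ u ≤ n` the subspace `W_u ∩ V_{n+1-u}` is a line, and lines with distinct `W`-indices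
are independent: each meets the span of those with smaller index inside
`W_{u-1} ∩ V_{n+1-u} = 0`.

If `(U_d, U_{d+1})` lies in the set, the conditions on `U_d ∩ V^{(i)}` and on
`U_{d+1} ∩ W^{(d+2-i)}` ask for two subspaces of `U_{d+1}` of total dimension `d + 2`, so
`V^{(i)} ∩ W^{(d+2-i)} ≠ 0`, which by transversality means `a_i + b_{d+2-i} ≤ d + 1`. Summed
against `|a| + |b| = d(d+2)` and `b_1 ≤ d`, all these inequalities are equalities. Then each
`W^{(d+2-i)} ∩ V^{(i)}` is a line and the same count puts it inside `U_d`, while the condition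
on `U_{d+1} ∩ W^{(1)}` puts the line `W^{(1)}` inside `U_{d+1}`; comparing dimensions, `U_d` and
`U_{d+1}` are the spans of these lines, and these spans do satisfy all the conditions.
-/

open Module

/-- The set of pairs `(U_d, U_{d+1})` of nested subspaces of dimensions `d` and `d+1`
lying in the Schubert cycles `Σ_a(V_•)` and `Σ_b(W_•)` respectively, where
`V^{(i)} = V_{n-d+i-a_i}` and `W^{(i)} = W_{n-(d+1)+i-b_i}` with `n = 2d+1`. -/
def schubertPairs {F V : Type*} [Field F] [AddCommGroup V] [Module F V]
    (d : ℕ) (Vf Wf : ℕ → Submodule F V) (a : Fin d → ℕ) (b : Fin (d + 1) → ℕ) :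
    Set (Submodule F V × Submodule F V) :=
  {p | p.1 ≤ p.2 ∧ finrank F p.1 = d ∧ finrank F p.2 = d + 1 ∧
    (∀ i : Fin d, i.val + 1 ≤ finrank F ↥(p.1 ⊓ Vf (d + 2 + i.val - a i))) ∧
    (∀ i : Fin (d + 1), i.val + 1 ≤ finrank F ↥(p.2 ⊓ Wf (d + 1 + i.val - b i)))}

open Finset

theorem iSup_fin_succ {α : Type*} [CompleteLattice α] {n : ℕ} (f : Fin (n + 1) → α) :
    ⨆ j, f j = f 0 ⊔ ⨆ i : Fin n, f i.succ :=
  le_antisymm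
    (iSup_le (Fin.cases le_sup_left fun i => le_sup_of_le_right (le_iSup_of_le i le_rfl)))
    (sup_le (le_iSup f 0) (iSup_le fun i => le_iSup f i.succ))

theorem Fin.val_rev_castSucc {n : ℕ} (i : Fin n) : (i.castSucc.rev : ℕ) = n - i := by
  rw [Fin.val_rev, Fin.val_castSucc]
  omega

namespace Submodule

variable {F V : Type*} [Field F] [AddCommGroup V] [Module F V] [FiniteDimensional F V]

theorem finrank_add_finrank_le_finrank_add_finrank_inf {S T Q : Submodule F V}
    (hS : S ≤ Q) (hT : T ≤ Q) :
    finrank F S + finrank F T ≤ finrank F Q + finrank F ↥(S ⊓ T) := by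
  have := finrank_sup_add_finrank_inf_eq S T
  have := finrank_mono (sup_le hS hT)
  omega

theorem le_of_one_le_finrank_inf {L X : Submodule F V} (hL : finrank F L = 1)
    (h : 1 ≤ finrank F ↥(X ⊓ L)) : L ≤ X :=
  inf_eq_right.mp (eq_of_le_of_finrank_le inf_le_right (hL ▸ h))

end Submodule

section Flags

variable {F V : Type*} [Field F] [AddCommGroup V] [Module F V]

structure TransverseFlags (n : ℕ) (Vf Wf : ℕ → Submodule F V) : Prop where
  finrank_eq : finrank F V = n
  mono_left : ∀ i j, i ≤ j → j ≤ n → Vf i ≤ Vf j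
  mono_right : ∀ i j, i ≤ j → j ≤ n → Wf i ≤ Wf j
  finrank_left : ∀ i ≤ n, finrank F (Vf i) = i
  finrank_right : ∀ i ≤ n, finrank F (Wf i) = i
  inf_eq_bot : ∀ i ≤ n, Vf i ⊓ Wf (n - i) = ⊥

def flagLine (n : ℕ) (Vf Wf : ℕ → Submodule F V) (u : ℕ) : Submodule F V :=
  Wf u ⊓ Vf (n + 1 - u)

namespace TransverseFlags

variable {n : ℕ} {Vf Wf : ℕ → Submodule F V}

theorem inf_eq_bot_of_add_le (hfl : TransverseFlags n Vf Wf) {v u : ℕ} (h : v + u ≤ n) :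
    Vf v ⊓ Wf u = ⊥ :=
  le_bot_iff.mp <| (inf_le_inf_left _ (hfl.mono_right u (n - v) (by omega) (by omega))).trans_eq
    (hfl.inf_eq_bot v (by omega))

variable [FiniteDimensional F V]

theorem flagLine_one (hfl : TransverseFlags n Vf Wf) : flagLine n Vf Wf 1 = Wf 1 := by
  have : Vf n = ⊤ :=
    Submodule.eq_top_of_finrank_eq (by rw [hfl.finrank_left n le_rfl, hfl.finrank_eq])
  rw [flagLine, Nat.add_sub_cancel, this, inf_top_eq]

theorem finrank_flagLine (hfl : TransverseFlags n Vf Wf) {u : ℕ} (h1 : 1 ≤ u) (hu : u ≤ n) :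
    finrank F (flagLine n Vf Wf u) = 1 := by
  have hlow := Submodule.finrank_add_finrank_le_finrank_add_finrank_inf
    (le_top : Wf u ≤ ⊤) (le_top : Vf (n + 1 - u) ≤ ⊤)
  rw [finrank_top, hfl.finrank_right u hu, hfl.finrank_left _ (by omega), hfl.finrank_eq] at hlow
  have hdisj : flagLine n Vf Wf u ⊓ Wf (u - 1) = ⊥ := le_bot_iff.mp <|
    (inf_le_inf_right _ inf_le_right).trans_eq (hfl.inf_eq_bot_of_add_le (by omega))
  have hsum := Submodule.finrank_sup_add_finrank_inf_eq (flagLine n Vf Wf u) (Wf (u - 1))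
  have hsup := Submodule.finrank_mono
    (sup_le inf_le_left (hfl.mono_right (u - 1) u (by omega) hu) :
      flagLine n Vf Wf u ⊔ Wf (u - 1) ≤ Wf u)
  rw [hdisj, finrank_bot, hfl.finrank_right (u - 1) (by omega)] at hsum
  rw [hfl.finrank_right u hu] at hsup
  unfold flagLine at *
  omega

theorem finrank_iSup_flagLine (hfl : TransverseFlags n Vf Wf) {ι : Type*} (w : ι → ℕ)
    (s : Finset ι) (hw : Set.InjOn w s) (hbd : ∀ k ∈ s, 1 ≤ w k ∧ w k ≤ n) :
    finrank F ↥(⨆ k ∈ s, flagLine n Vf Wf (w k)) = #s := by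
  classical
  induction s using Finset.induction_on_max_value w with
  | empty => simp
  | insert k s hks hmax ih =>
    have hws : Set.InjOn w s := hw.mono (coe_subset.mpr (subset_insert k s))
    obtain ⟨hk1, hkn⟩ := hbd k (mem_insert_self k s)
    have hlt : ∀ j ∈ s, w j < w k := fun j hj => (hmax j hj).lt_of_ne fun h =>
      hks (hw (by simp [hj]) (by simp) h ▸ hj)
    have hdisj : flagLine n Vf Wf (w k) ⊓ ⨆ j ∈ s, flagLine n Vf Wf (w j) = ⊥ := by
      refine le_bot_iff.mp ((inf_le_inf inf_le_right (iSup₂_le fun j hj => ?_)).trans_eq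
        (hfl.inf_eq_bot_of_add_le (v := n + 1 - w k) (u := w k - 1) (by omega)))
      exact inf_le_left.trans (hfl.mono_right _ _ (by have := hlt j hj; omega) (by omega))
    have := Submodule.finrank_sup_add_finrank_inf_eq (flagLine n Vf Wf (w k))
      (⨆ j ∈ s, flagLine n Vf Wf (w j))
    rw [hdisj, finrank_bot, hfl.finrank_flagLine hk1 hkn,
      ih hws fun j hj => hbd j (mem_insert_of_mem hj)] at this
    rw [Finset.iSup_insert, card_insert_of_notMem hks]
    omega

theorem finrank_iSup_flagLine_of_injective (hfl : TransverseFlags n Vf Wf) {ι : Type*}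
    [Fintype ι] {w : ι → ℕ} (hw : Function.Injective w)
    (hbd : ∀ k, 1 ≤ w k ∧ w k ≤ n) :
    finrank F ↥(⨆ k, flagLine n Vf Wf (w k)) = Fintype.card ι := by
  have h := hfl.finrank_iSup_flagLine w univ hw.injOn fun k _ => hbd k
  rwa [iSup_congr fun k => iSup_pos (mem_univ k), card_univ] at h

theorem card_le_finrank_of_flagLine_le (hfl : TransverseFlags n Vf Wf) {ι : Type*} {w : ι → ℕ}
    {s : Finset ι} (hw : Set.InjOn w s) (hbd : ∀ k ∈ s, 1 ≤ w k ∧ w k ≤ n)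
    {Y : Submodule F V}    (hY : ∀ k ∈ s, flagLine n Vf Wf (w k) ≤ Y) : #s ≤ finrank F Y :=
  hfl.finrank_iSup_flagLine w s hw hbd ▸ Submodule.finrank_mono (iSup₂_le hY)

end TransverseFlags

end Flags

section Schubert

variable {F V : Type*} [Field F] [AddCommGroup V] [Module F V] {d : ℕ}
  {Vf Wf : ℕ → Submodule F V} {a : Fin d → ℕ} {b : Fin (d + 1) → ℕ}

/-- As `i.castSucc.rev = d - i`, this says `b_1 = d` and `a_i + b_{d+2-i} = d + 1` in the
`1`-based indexing of the paper. -/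
def IsComplementary (a : Fin d → ℕ) (b : Fin (d + 1) → ℕ) : Prop :=
  b 0 = d ∧ ∀ i, a i + b i.castSucc.rev = d + 1

theorem isComplementary_iff (habd : ∀ i, a i ≤ d + 1) :
    IsComplementary a b ↔ (b 0 = d ∧ ∀ i : Fin (d + 1), ∀ hi : 1 ≤ i.val,
      b i = d + 1 - a ⟨d - i.val, by omega⟩) := by
  refine and_congr_right fun _ => ⟨fun h i hi => ?_, fun h i => ?_⟩
  · have hi' : (⟨d - i.val, by omega⟩ : Fin d).castSucc.rev = i :=
      Fin.ext (by simp only [Fin.val_rev_castSucc]; omega)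
    have := h ⟨d - i.val, by omega⟩
    rw [hi'] at this
    omega
  · have hi' : (⟨d - i.castSucc.rev.val, by rw [Fin.val_rev_castSucc]; omega⟩ : Fin d) = i :=
      Fin.ext (by simp only [Fin.val_rev_castSucc]; omega)
    have := h i.castSucc.rev (by rw [Fin.val_rev_castSucc]; omega)
    rw [hi'] at this
    have := habd i
    omega

theorem isComplementary_of_add_le_of_sum_eq (hb0 : b 0 ≤ d)
    (hab : ∀ i, a i + b i.castSucc.rev ≤ d + 1) (hsum : ∑ i, a i + ∑ i, b i = d * (d + 2)) :
    IsComplementary a b := by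
  have hb : ∑ i, b i = b 0 + ∑ i : Fin d, b i.castSucc.rev := by
    rw [Fin.sum_univ_succ, ← Equiv.sum_comp Fin.revPerm]
    simp only [Fin.revPerm_apply, Fin.rev_castSucc]
  have hle : ∑ i, (a i + b i.castSucc.rev) ≤ ∑ _i : Fin d, (d + 1) :=
    sum_le_sum fun i _ => hab i
  have hconst : ∑ _i : Fin d, (d + 1) + d = d * (d + 2) := by
    rw [sum_const, card_univ, Fintype.card_fin, smul_eq_mul]
    ring
  rw [sum_add_distrib] at hle
  have hb0' : b 0 = d := by omega
  refine ⟨hb0', fun i => ?_⟩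
  refine (sum_eq_sum_iff_of_le fun i _ => hab i).mp ?_ i (mem_univ i)
  rw [sum_add_distrib]
  omega

def rightIndex (b : Fin (d + 1) → ℕ) (j : Fin (d + 1)) : ℕ := d + 1 + j - b j

theorem strictMono_rightIndex (hbanti : ∀ i j, i ≤ j → b j ≤ b i)
    (hbbd : ∀ i, b i ≤ d) :
    StrictMono (rightIndex b) := fun i j hij => by
  have := hbanti i j hij.le
  have := hbbd i
  have : (i : ℕ) < j := hij
  unfold rightIndex
  omega

theorem rightIndex_mem_Icc (hbbd : ∀ i, b i ≤ d) (j : Fin (d + 1)) :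
    rightIndex b j ∈ Set.Icc 1 (2 * d + 1) := by
  rw [Set.mem_Icc]
  have := hbbd j
  have := j.isLt
  unfold rightIndex
  omega

theorem IsComplementary.sub_eq_sub_rightIndex (hc : IsComplementary a b) (i : Fin d) :
    d + 2 + i - a i = 2 * d + 1 + 1 - rightIndex b i.castSucc.rev := by
  have := hc.2 i
  have := Fin.val_rev_castSucc i
  unfold rightIndex
  omega

def lineSpan (d : ℕ) (Vf Wf : ℕ → Submodule F V) (b : Fin (d + 1) → ℕ) : Submodule F V :=
  ⨆ i : Fin d, flagLine (2 * d + 1) Vf Wf (rightIndex b i.succ)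

theorem IsComplementary.iSup_eq_lineSpan (hc : IsComplementary a b) :
    ⨆ i : Fin d, Wf (d + 1 + i.succ.val - b i.succ) ⊓ Vf (d + 2 + i.rev.val - a i.rev) =
      lineSpan d Vf Wf b := by
  refine iSup_congr fun i => ?_
  rw [flagLine, hc.sub_eq_sub_rightIndex, Fin.rev_castSucc, Fin.rev_rev]
  rfl

variable [FiniteDimensional F V]

theorem one_le_finrank_inf_of_mem_schubertPairs {p : Submodule F V × Submodule F V}
    (hp : p ∈ schubertPairs d Vf Wf a b) (i : Fin d) :
    1 ≤ finrank F ↥(p.1 ⊓ (Vf (d + 2 + i - a i) ⊓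
      Wf (d + 1 + i.castSucc.rev - b i.castSucc.rev))) := by
  obtain ⟨hle, -, h2, hV, hW⟩ := hp
  have hS := hV i
  have hT := hW i.castSucc.rev
  have := Submodule.finrank_add_finrank_le_finrank_add_finrank_inf
    (inf_le_left.trans hle : p.1 ⊓ Vf (d + 2 + i - a i) ≤ p.2)
    (inf_le_left : p.2 ⊓ Wf (d + 1 + i.castSucc.rev - b i.castSucc.rev) ≤ p.2)
  rw [inf_inf_inf_comm, inf_eq_left.mpr hle, h2] at this
  have := Fin.val_rev_castSucc i
  omega

theorem TransverseFlags.isComplementary_of_mem_schubertPairs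
    (hfl : TransverseFlags (2 * d + 1) Vf Wf) (hbbd : ∀ i, b i ≤ d)
    (hsum : ∑ i, a i + ∑ i, b i = d * (d + 2))
    {p : Submodule F V × Submodule F V} (hp : p ∈ schubertPairs d Vf Wf a b) :
    IsComplementary a b := by
  refine isComplementary_of_add_le_of_sum_eq (hbbd 0) (fun i => ?_) hsum
  have h := one_le_finrank_inf_of_mem_schubertPairs hp i
  by_contra! hlt
  rw [hfl.inf_eq_bot_of_add_le (by rw [Fin.val_rev_castSucc]; omega), inf_bot_eq, finrank_bot] at h
  omega

theorem TransverseFlags.finrank_lineSpan (hfl : TransverseFlags (2 * d + 1) Vf Wf)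
    (hbanti : ∀ i j, i ≤ j → b j ≤ b i) (hbbd : ∀ i, b i ≤ d) :
    finrank F (lineSpan d Vf Wf b) = d :=
  (hfl.finrank_iSup_flagLine_of_injective
    ((strictMono_rightIndex hbanti hbbd).injective.comp (Fin.succ_injective d))
    fun i => rightIndex_mem_Icc hbbd i.succ).trans (Fintype.card_fin d)

theorem TransverseFlags.lineSpan_sup_eq_iSup (hfl : TransverseFlags (2 * d + 1) Vf Wf)
    (hb0 : b 0 = d) :
    lineSpan d Vf Wf b ⊔ Wf 1 = ⨆ j, flagLine (2 * d + 1) Vf Wf (rightIndex b j) := by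
  have h0 : rightIndex b 0 = 1 := by simp [rightIndex, hb0]
  rw [iSup_fin_succ, h0, hfl.flagLine_one, sup_comm, lineSpan]

theorem TransverseFlags.finrank_lineSpan_sup (hfl : TransverseFlags (2 * d + 1) Vf Wf)
    (hbanti : ∀ i j, i ≤ j → b j ≤ b i) (hbbd : ∀ i, b i ≤ d) (hb0 : b 0 = d) :
    finrank F ↥(lineSpan d Vf Wf b ⊔ Wf 1) = d + 1 := by
  rw [hfl.lineSpan_sup_eq_iSup hb0, hfl.finrank_iSup_flagLine_of_injective
    (strictMono_rightIndex hbanti hbbd).injective (rightIndex_mem_Icc hbbd), Fintype.card_fin]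

theorem TransverseFlags.lineSpan_mem_schubertPairs (hfl : TransverseFlags (2 * d + 1) Vf Wf)
    (hbanti : ∀ i j, i ≤ j → b j ≤ b i) (hbbd : ∀ i, b i ≤ d)
    (hc : IsComplementary a b) :
    (lineSpan d Vf Wf b, lineSpan d Vf Wf b ⊔ Wf 1) ∈ schubertPairs d Vf Wf a b := by
  have hw := strictMono_rightIndex hbanti hbbd
  have hbd := rightIndex_mem_Icc hbbd
  refine ⟨le_sup_left, hfl.finrank_lineSpan hbanti hbbd,
    hfl.finrank_lineSpan_sup hbanti hbbd hc.1, fun i => ?_, fun j => ?_⟩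
  · have hcard : #(Ici i.castSucc.rev) = i + 1 := by
      rw [Fin.card_Ici, Fin.val_rev_castSucc]
      omega
    refine hcard ▸ hfl.card_le_finrank_of_flagLine_le hw.injective.injOn (fun k _ => hbd k)
      fun k hk => le_inf ?_ ?_
    · have hk0 : k ≠ 0 := Fin.pos_iff_ne_zero.mp <| (Fin.lt_def.mpr (by
        rw [Fin.val_rev_castSucc, Fin.val_zero]; omega)).trans_le (mem_Ici.mp hk)
      obtain ⟨k', rfl⟩ := Fin.exists_succ_eq.mpr hk0
      exact le_iSup (fun i => flagLine (2 * d + 1) Vf Wf (rightIndex b i.succ)) k'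
    · rw [hc.sub_eq_sub_rightIndex i]
      have := hw.monotone (mem_Ici.mp hk)
      have := (hbd i.castSucc.rev).1
      exact inf_le_right.trans (hfl.mono_left _ _ (by omega) (by omega))
  · refine Fin.card_Iic j ▸ hfl.card_le_finrank_of_flagLine_le hw.injective.injOn
      (fun k _ => hbd k) fun k hk => le_inf ?_ ?_
    · exact hfl.lineSpan_sup_eq_iSup hc.1 ▸
        le_iSup (fun k => flagLine (2 * d + 1) Vf Wf (rightIndex b k)) k
    · exact inf_le_left.trans (hfl.mono_right _ _ (hw.monotone (mem_Iic.mp hk)) (hbd j).2)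

theorem TransverseFlags.eq_of_mem_schubertPairs (hfl : TransverseFlags (2 * d + 1) Vf Wf)
    (hbanti : ∀ i j, i ≤ j → b j ≤ b i) (hbbd : ∀ i, b i ≤ d) (hc : IsComplementary a b)
    {p : Submodule F V × Submodule F V} (hp : p ∈ schubertPairs d Vf Wf a b) :
    p = (lineSpan d Vf Wf b, lineSpan d Vf Wf b ⊔ Wf 1) := by
  have hline (i : Fin d) : flagLine (2 * d + 1) Vf Wf (rightIndex b i.succ) ≤ p.1 := by
    have h := one_le_finrank_inf_of_mem_schubertPairs hp i.rev
    rw [hc.sub_eq_sub_rightIndex, inf_comm (Vf _), Fin.rev_castSucc, Fin.rev_rev] at h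
    exact Submodule.le_of_one_le_finrank_inf
      (hfl.finrank_flagLine (rightIndex_mem_Icc hbbd _).1 (rightIndex_mem_Icc hbbd _).2) h
  obtain ⟨hle, h1, h2, -, hW⟩ := hp
  have hU : lineSpan d Vf Wf b = p.1 := Submodule.eq_of_le_of_finrank_le (iSup_le hline)
    (by rw [h1, hfl.finrank_lineSpan hbanti hbbd])
  have hW1 : Wf 1 ≤ p.2 := by
    refine Submodule.le_of_one_le_finrank_inf (hfl.finrank_right 1 (by omega)) ?_
    have h := hW 0
    rwa [Fin.val_zero, hc.1, show d + 1 + 0 - d = 1 by omega] at h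
  have hU' : lineSpan d Vf Wf b ⊔ Wf 1 = p.2 := Submodule.eq_of_le_of_finrank_le
    (sup_le (hU ▸ hle) hW1) (by rw [h2, hfl.finrank_lineSpan_sup hbanti hbbd hc.1])
  rw [hU', hU]

theorem TransverseFlags.schubertPairs_eq_singleton (hfl : TransverseFlags (2 * d + 1) Vf Wf)
    (hbanti : ∀ i j, i ≤ j → b j ≤ b i) (hbbd : ∀ i, b i ≤ d)
    (hc : IsComplementary a b) :
    schubertPairs d Vf Wf a b = {(lineSpan d Vf Wf b, lineSpan d Vf Wf b ⊔ Wf 1)} :=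
  Set.eq_singleton_iff_unique_mem.mpr ⟨hfl.lineSpan_mem_schubertPairs hbanti hbbd hc,
    fun _ hp => hfl.eq_of_mem_schubertPairs hbanti hbbd hc hp⟩

end Schubert

/-- For transverse complete flags `V_•, W_•` in a `(2d+1)`-dimensional
space and Young-diagram indices `a ⊆ d × (d+1)`, `b ⊆ (d+1) × d` with `|a| + |b| = d(d+2)`,
the set of flags `(U_d, U_{d+1})` in the corresponding pair of Schubert cycles is nonempty
iff `b₁ = d` and `b_i = d + 1 - a_{d+2-i}` for `i = 2, …, d+1`, in which case it consists of
the single pair `U_d = Σ_{i=2}^{d+1} (W^{(i)} ∩ V^{(d+2-i)})`, `U_{d+1} = U_d + W^{(1)}`. -/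
theorem schubertPairs_nonempty_iff {F V : Type*} [Field F] [AddCommGroup V] [Module F V]
    [FiniteDimensional F V] (d : ℕ) (hdim : finrank F V = 2 * d + 1)
    (Vf Wf : ℕ → Submodule F V)
    (hVmono : ∀ i j : ℕ, i ≤ j → j ≤ 2 * d + 1 → Vf i ≤ Vf j)
    (hWmono : ∀ i j : ℕ, i ≤ j → j ≤ 2 * d + 1 → Wf i ≤ Wf j)
    (hVrank : ∀ i ≤ 2 * d + 1, finrank F (Vf i) = i)
    (hWrank : ∀ i ≤ 2 * d + 1, finrank F (Wf i) = i)
    (htrans : ∀ i ≤ 2 * d + 1, Vf i ⊓ Wf (2 * d + 1 - i) = ⊥)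
    (a : Fin d → ℕ) (b : Fin (d + 1) → ℕ)
    (habd : ∀ i : Fin d, a i ≤ d + 1)
    (hbanti : ∀ i j : Fin (d + 1), i ≤ j → b j ≤ b i) (hbbd : ∀ i : Fin (d + 1), b i ≤ d)
    (hsum : (∑ i, a i) + (∑ i, b i) = d * (d + 2)) :
    ((schubertPairs d Vf Wf a b).Nonempty ↔
      (b 0 = d ∧ ∀ i : Fin (d + 1), ∀ hi : 1 ≤ i.val,
        b i = d + 1 - a ⟨d - i.val, by omega⟩)) ∧
    ((b 0 = d ∧ ∀ i : Fin (d + 1), ∀ hi : 1 ≤ i.val,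
        b i = d + 1 - a ⟨d - i.val, by omega⟩) →
      schubertPairs d Vf Wf a b =
        {(⨆ i : Fin d,
            (Wf (d + 1 + i.succ.val - b i.succ) ⊓ Vf (d + 2 + i.rev.val - a i.rev)),
          (⨆ i : Fin d,
            (Wf (d + 1 + i.succ.val - b i.succ) ⊓ Vf (d + 2 + i.rev.val - a i.rev))) ⊔
            Wf (d + 1 - b 0))}) := by
  have hfl : TransverseFlags (2 * d + 1) Vf Wf := ⟨hdim, hVmono, hWmono, hVrank, hWrank, htrans⟩
  rw [← isComplementary_iff habd]
  refine ⟨⟨fun ⟨_, hp⟩ => hfl.isComplementary_of_mem_schubertPairs hbbd hsum hp,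
    fun hc => hfl.schubertPairs_eq_singleton hbanti hbbd hc ▸ Set.singleton_nonempty _⟩,
    fun hc => ?_⟩
  rw [hc.iSup_eq_lineSpan, hc.1, Nat.add_sub_cancel_left]
  exact hfl.schubertPairs_eq_singleton hbanti hbbd hc
end

section
/- Let d ≥ 1 and let V be a nondegenerate k/κ-hermitian space of dimension 2d+1. Let W' ⊆ V be a special subspace of codimension d−1 (so dim W' = d+2 and dim W'⊥ = d−1), and equip W'/W'⊥ (a nondegenerate hermitian space of dimension 3) with the induced hermitian form h̄ satisfying h̄(π(x),π(y)) = (x,y), where π : W' → W'/W'⊥ is the quotient map. Then the number of isotropic lines L ⊆ V with L ⊆ W' and L ⊄ W'⊥ equals q^{2(d−1)} times the number of isotropic lines of (W'/W'⊥, h̄). -/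
open Module

variable {k : Type*} [Field k] {V : Type*} [AddCommGroup V] [Module k V]

/-! `N := W'⊥` lies in `W'` and is the radical of `(·,·)` on `W'`, so an isotropic line of `W'`
not contained in `N` maps to an isotropic line of `W'/N`. Fixing a lift `v` of a generator of a
line `ℓ` of `W'/N`, the lines of `W'` over `ℓ` are exactly the `k ∙ (v + n)`, `n ∈ N`, and they are
pairwise distinct. Hence the count is `|N|` times the number of isotropic lines of `W'/N`, and
`|N| = q ^ (2 dim N)` with `dim N = dim V - dim W' = d - 1` by nondegeneracy. -/

section Perp

variable {σ : k →+* k} {h : V →ₗ[k] V →ₛₗ[σ] k}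

theorem mem_perp_iff_of_isRefl (hh : h.IsRefl) {W : Submodule k V} {x : V} :
    x ∈ perp h W ↔ ∀ u ∈ W, h u x = 0 :=
  forall₂_congr fun _ _ ↦ hh.eq_iff

theorem ker_dualMap_subtype_comp_flip (hh : h.IsRefl) (W : Submodule k V) :
    LinearMap.ker (W.subtype.dualMap ∘ₛₗ h.flip) = perp h W := by
  ext x
  rw [mem_perp_iff_of_isRefl hh, LinearMap.mem_ker]
  simp [LinearMap.ext_iff]

theorem surjective_dualMap_subtype_comp_flip [Finite k] [FiniteDimensional k V]
    (hh : h.IsRefl) (hs : h.SeparatingLeft) (W : Submodule k V) :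
    Function.Surjective (W.subtype.dualMap ∘ₛₗ h.flip) := by
  have hinj : Function.Injective h.flip := by
    rw [← LinearMap.ker_eq_bot, LinearMap.ker_eq_bot']
    intro x hx
    exact hs x fun y ↦ hh _ _ (LinearMap.congr_fun hx y)
  have : Finite (Dual k V) := Module.finite_of_finite k
  have hbij : Function.Bijective h.flip := hinj.bijective_of_nat_card_le <| by
    rw [Module.natCard_eq_pow_finrank (K := k) (V := V),
      Module.natCard_eq_pow_finrank (K := k) (V := Dual k V),
      Subspace.dual_finrank_eq]
  exact (LinearMap.dualMap_surjective_of_injective W.injective_subtype).comp hbij.surjective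

theorem finrank_perp_add_finrank_s10 [Finite k] [FiniteDimensional k V]
    (hh : h.IsRefl) (hs : h.SeparatingLeft) (W : Submodule k V) :
    finrank k (perp h W) + finrank k W = finrank k V := by
  -- `φ` is only `σ`-semilinear, so we count points instead of using rank–nullity.
  set φ := W.subtype.dualMap ∘ₛₗ h.flip
  have hcard : Nat.card V = Nat.card (perp h W) * Nat.card (Dual k W) := by
    rw [AddSubgroup.card_eq_card_quotient_mul_card_addSubgroup φ.toAddMonoidHom.ker,
      Nat.card_congr (QuotientAddGroup.quotientKerEquivOfSurjective φ.toAddMonoidHom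
        (surjective_dualMap_subtype_comp_flip hh hs W)).toEquiv, mul_comm]
    congr 1
    exact Nat.card_congr (Equiv.subtypeEquivRight fun x ↦ by
      rw [← ker_dualMap_subtype_comp_flip hh W]; rfl)
  rw [Module.natCard_eq_pow_finrank (K := k) (V := V),
    Module.natCard_eq_pow_finrank (K := k) (V := perp h W),
    Module.natCard_eq_pow_finrank (K := k) (V := Dual k W), Subspace.dual_finrank_eq,
    ← pow_add] at hcard
  exact (Nat.pow_right_injective Finite.one_lt_card hcard).symm

end Perp

section Lines

variable {W : Type*} [AddCommGroup W] [Module k W] {N : Submodule k W}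

theorem exists_notMem_span_singleton_mkQ_eq {ℓ : Submodule k (W ⧸ N)} (hℓ : finrank k ℓ = 1) :
    ∃ v ∉ N, k ∙ N.mkQ v = ℓ := by
  obtain ⟨y, hy0, rfl⟩ := (atom_iff_nonzero_span ℓ).mp
    (Submodule.isAtom_iff_finrank_eq_one.mpr hℓ)
  obtain ⟨v, rfl⟩ := N.mkQ_surjective y
  exact ⟨v, fun hv ↦ hy0 ((Submodule.Quotient.mk_eq_zero N).mpr hv), rfl⟩

theorem map_mkQ_span_singleton_add {v n : W} (hn : n ∈ N) :
    (k ∙ (v + n)).map N.mkQ = k ∙ N.mkQ v := by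
  simp [Submodule.map_span, (Submodule.Quotient.mk_eq_zero N).mpr hn]

theorem eq_of_span_singleton_add_eq {v n n' : W} (hv : v ∉ N) (hn : n ∈ N) (hn' : n' ∈ N)
    (heq : k ∙ (v + n) = k ∙ (v + n')) : n = n' := by
  obtain ⟨c, hc⟩ := Submodule.mem_span_singleton.mp (heq ▸ Submodule.mem_span_singleton_self _)
  obtain rfl : c = 1 := by
    by_contra hc1
    have hmem : (c - 1) • v ∈ N := by
      have : (c - 1) • v = n - c • n' := by linear_combination (norm := module) hc
      exact this ▸ N.sub_mem hn (N.smul_mem c hn')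
    exact hv ((N.smul_mem_iff (sub_ne_zero.mpr hc1)).mp hmem)
  simpa using hc.symm

theorem exists_mem_span_singleton_eq_add {v x : W} (hx : x ∉ N)
    (hxv : k ∙ N.mkQ x = k ∙ N.mkQ v) : ∃ n ∈ N, k ∙ x = k ∙ (v + n) := by
  obtain ⟨a, ha⟩ := Submodule.mem_span_singleton.mp (hxv ▸ Submodule.mem_span_singleton_self _)
  have ha0 : a ≠ 0 := by
    rintro rfl
    exact hx ((Submodule.Quotient.mk_eq_zero N).mp (by simpa using ha.symm))
  refine ⟨a⁻¹ • x - v, ?_, ?_⟩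
  · rw [← Submodule.Quotient.mk_eq_zero, Submodule.Quotient.mk_sub, Submodule.Quotient.mk_smul]
    simp only [Submodule.mkQ_apply] at ha
    rw [← ha, smul_smul, inv_mul_cancel₀ ha0, one_smul, sub_self]
  · rw [add_sub_cancel, Submodule.span_singleton_smul_eq (inv_ne_zero ha0).isUnit]

theorem natCard_lines_not_le_eq_mul (P : Submodule k (W ⧸ N) → Prop) :
    Nat.card {L : Submodule k W | finrank k L = 1 ∧ ¬ L ≤ N ∧ P (L.map N.mkQ)} =
      Nat.card {ℓ : Submodule k (W ⧸ N) | finrank k ℓ = 1 ∧ P ℓ} * Nat.card N := by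
  set T := {ℓ : Submodule k (W ⧸ N) | finrank k ℓ = 1 ∧ P ℓ}
  choose v hvN hv using fun ℓ : T ↦ exists_notMem_span_singleton_mkQ_eq ℓ.2.1
  have hvn (ℓ : T) (n : N) : v ℓ + n ∉ N := (N.add_mem_iff_left n.2).not.mpr (hvN ℓ)
  let G : T × N → {L : Submodule k W | finrank k L = 1 ∧ ¬ L ≤ N ∧ P (L.map N.mkQ)} :=
    fun p ↦ ⟨k ∙ (v p.1 + p.2),
      finrank_span_singleton (fun h0 ↦ hvn p.1 p.2 (h0 ▸ N.zero_mem)),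
      (Submodule.span_singleton_le_iff_mem _ _).not.mpr (hvn p.1 p.2),
      by rw [map_mkQ_span_singleton_add p.2.2, hv]; exact p.1.2.2⟩
  have hG : Function.Bijective G := by
    constructor
    · rintro ⟨ℓ, n⟩ ⟨ℓ', n'⟩ heq
      have heq : k ∙ (v ℓ + n) = k ∙ (v ℓ' + n') := congrArg Subtype.val heq
      obtain rfl : ℓ = ℓ' := Subtype.ext <| by
        rw [← hv, ← hv, ← map_mkQ_span_singleton_add n.2, heq, map_mkQ_span_singleton_add n'.2]
      rw [Subtype.ext (eq_of_span_singleton_add_eq (hvN ℓ) n.2 n'.2 heq)]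
    · rintro ⟨L, hL1, hLN, hLP⟩
      obtain ⟨x, -, rfl⟩ := (atom_iff_nonzero_span L).mp
        (Submodule.isAtom_iff_finrank_eq_one.mpr hL1)
      have hxN : x ∉ N := (Submodule.span_singleton_le_iff_mem _ _).not.mp hLN
      have hℓ : k ∙ N.mkQ x ∈ T := by
        refine ⟨finrank_span_singleton fun h0 ↦ hxN ((Submodule.Quotient.mk_eq_zero N).mp h0), ?_⟩
        simpa [Submodule.map_span] using hLP
      obtain ⟨n, hn, hxn⟩ := exists_mem_span_singleton_eq_add hxN (hv ⟨_, hℓ⟩).symm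
      exact ⟨(⟨_, hℓ⟩, ⟨n, hn⟩), Subtype.ext hxn.symm⟩
  rw [← Nat.card_prod]
  exact (Nat.card_congr (Equiv.ofBijective G hG)).symm

end Lines

theorem natCard_setOf_le_and (U : Submodule k V) (Q : Submodule k V → Prop) :
    Nat.card {L : Submodule k V | L ≤ U ∧ Q L} =
      Nat.card {L : Submodule k U | Q (L.map U.subtype)} := by
  have himage : {L : Submodule k V | L ≤ U ∧ Q L} =
      Submodule.map U.subtype '' {L : Submodule k U | Q (L.map U.subtype)} := by
    ext L
    constructor
    · rintro ⟨hle, hQ⟩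
      have hL : (L.comap U.subtype).map U.subtype = L := by
        rw [Submodule.map_comap_subtype, inf_eq_right.mpr hle]
      exact ⟨L.comap U.subtype, show Q _ by rwa [hL], hL⟩
    · rintro ⟨L, hQ, rfl⟩
      exact ⟨Submodule.map_subtype_le U L, hQ⟩
  rw [himage, Nat.card_image_of_injective
    (Submodule.map_injective_of_injective U.injective_subtype)]

theorem card_isotropic_lines_in_special_general (q d : ℕ) (hd : 1 ≤ d)
    [Fintype k] (hcard : Fintype.card k = q ^ 2)
    [FiniteDimensional k V] (hdim : finrank k V = 2 * d + 1)
    (σ : k →+* k)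
    (h : V →ₗ[k] V →ₛₗ[σ] k)
    (hherm : ∀ x y : V, h x y = σ (h y x))
    (hnd : ∀ x : V, (∀ y : V, h x y = 0) → x = 0)
    (W' : Submodule k V) (hW' : perp h W' ≤ W') (hW'dim : finrank k W' = d + 2)
    (hb : (W' ⧸ (perp h W').comap W'.subtype) →ₗ[k]
          (W' ⧸ (perp h W').comap W'.subtype) →ₛₗ[σ] k)
    (hbcompat : ∀ x y : W',
      hb (Submodule.Quotient.mk x) (Submodule.Quotient.mk y) = h (x : V) (y : V)) :
    Nat.card {L : Submodule k V | finrank k L = 1 ∧ (∀ x ∈ L, ∀ y ∈ L, h x y = 0) ∧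
        L ≤ W' ∧ ¬ L ≤ perp h W'} =
      q ^ (2 * (d - 1)) *
        Nat.card {L : Submodule k (W' ⧸ (perp h W').comap W'.subtype) |
          finrank k L = 1 ∧ ∀ x ∈ L, ∀ y ∈ L, hb x y = 0} := by
  have hrefl : h.IsRefl := LinearMap.IsRefl.flip_isRefl_iff.mp
    (LinearMap.isSymm_def.mpr fun x y ↦ (hherm x y).symm).isRefl
  have hN : finrank k ((perp h W').comap W'.subtype) = d - 1 := by
    have := finrank_perp_add_finrank_s10 hrefl hnd W'
    rw [(Submodule.comapSubtypeEquivOfLe hW').finrank_eq]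
    omega
  have hlines_le : {L : Submodule k V | finrank k L = 1 ∧ (∀ x ∈ L, ∀ y ∈ L, h x y = 0) ∧
      L ≤ W' ∧ ¬ L ≤ perp h W'} = {L : Submodule k V | L ≤ W' ∧
        finrank k L = 1 ∧ ¬ L ≤ perp h W' ∧ ∀ x ∈ L, ∀ y ∈ L, h x y = 0} := by
    ext L
    exact ⟨fun ⟨h1, h2, h3, h4⟩ ↦ ⟨h3, h1, h4, h2⟩, fun ⟨h3, h1, h4, h2⟩ ↦ ⟨h1, h2, h3, h4⟩⟩
  have hlines_quot : {L : Submodule k W' | finrank k (L.map W'.subtype) = 1 ∧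
      ¬ L.map W'.subtype ≤ perp h W' ∧
        ∀ x ∈ L.map W'.subtype, ∀ y ∈ L.map W'.subtype, h x y = 0} =
      {L : Submodule k W' | finrank k L = 1 ∧ ¬ L ≤ (perp h W').comap W'.subtype ∧
        ∀ x ∈ L.map (Submodule.mkQ _), ∀ y ∈ L.map (Submodule.mkQ _), hb x y = 0} := by
    ext L
    simp only [Submodule.map_le_iff_le_comap, Submodule.mem_map, forall_exists_index, and_imp,
      forall_apply_eq_imp_iff₂, Submodule.mkQ_apply, Submodule.subtype_apply, hbcompat,
      Submodule.finrank_map_subtype_eq]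
  rw [hlines_le, natCard_setOf_le_and, hlines_quot,
    natCard_lines_not_le_eq_mul fun ℓ ↦ ∀ x ∈ ℓ, ∀ y ∈ ℓ, hb x y = 0, mul_comm,
    Module.natCard_eq_pow_finrank (K := k) (V := (perp h W').comap W'.subtype),
    Nat.card_eq_fintype_card, hcard, hN, pow_mul]

/-- Let `V` be a nondegenerate `k/κ`-hermitian space of dimension `2d+1`
and `W' ⊆ V` a special subspace of codimension `d-1`, with induced hermitian form `h̄` on
the 3-dimensional quotient `W'/W'⊥`. The number of isotropic lines `L ⊆ W'` with
`L ⊄ W'⊥` equals `q^{2(d-1)}` times the number of isotropic lines of `(W'/W'⊥, h̄)`. -/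
theorem card_isotropic_lines_in_special (q d : ℕ) (hd : 1 ≤ d)
    [Fintype k] (hcard : Fintype.card k = q ^ 2)
    [FiniteDimensional k V] (hdim : finrank k V = 2 * d + 1)
    (σ : k →+* k) (hσ : ∀ x : k, σ x = x ^ q)
    (h : V →ₗ[k] V →ₛₗ[σ] k)
    (hherm : ∀ x y : V, h x y = σ (h y x))
    (hnd : ∀ x : V, (∀ y : V, h x y = 0) → x = 0)
    (W' : Submodule k V) (hW' : perp h W' ≤ W') (hW'dim : finrank k W' = d + 2)
    (hb : (W' ⧸ (perp h W').comap W'.subtype) →ₗ[k]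
          (W' ⧸ (perp h W').comap W'.subtype) →ₛₗ[σ] k)
    (hbcompat : ∀ x y : W',
      hb (Submodule.Quotient.mk x) (Submodule.Quotient.mk y) = h (x : V) (y : V)) :
    Nat.card {L : Submodule k V | finrank k L = 1 ∧ (∀ x ∈ L, ∀ y ∈ L, h x y = 0) ∧
        L ≤ W' ∧ ¬ L ≤ perp h W'} =
      q ^ (2 * (d - 1)) *
        Nat.card {L : Submodule k (W' ⧸ (perp h W').comap W'.subtype) |
          finrank k L = 1 ∧ ∀ x ∈ L, ∀ y ∈ L, hb x y = 0} :=
  card_isotropic_lines_in_special_general q d hd hcard hdim σ h hherm hnd W' hW' hW'dim hb hbcompat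
end
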